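/- Let κ ∈ ℂ \ {0}, n ∈ ℕ, and a, b, c ∈ ℂ[z] with at least one of a, b, c constant but not all constant. If [a]_κ^{n̄}, [b]_κ^{n̄}, [c]_κ^{n̄} are relatively prime and satisfy [a]_κ^{n̄} + [b]_κ^{n̄} = [c]_κ^{n̄}, then n = 1. -/
import Mathlib


open Polynomial

noncomputable def deltaP (κ : ℂ) (p : ℂ[X]) : ℂ[X] := p.comp (X + C κ) - p

noncomputable def nTilde (κ : ℂ) (p : ℂ[X]) : ℕ :=
  ∑ᶠ w : ℂ, (p.rootMultiplicity w - min (p.rootMultiplicity w) (p.rootMultiplicity (w + κ)))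

noncomputable def radTilde (κ : ℂ) (p : ℂ[X]) : ℂ[X] :=
  ∏ᶠ w : ℂ, (X - C w) ^ (p.rootMultiplicity w - min (p.rootMultiplicity w) (p.rootMultiplicity (w + κ)))

noncomputable def nTildeQ (κ : ℂ) (q : ℕ) (p : ℂ[X]) : ℕ :=
  ∑ᶠ w : ℂ, (p.rootMultiplicity w -
    (Finset.range (q + 1)).inf' (Finset.nonempty_range_iff.mpr (Nat.succ_ne_zero q)) (fun j => p.rootMultiplicity (w + (j : ℂ) * κ)))

noncomputable def kFac (κ : ℂ) (n : ℕ) (p : ℂ[X]) : ℂ[X] :=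
  ∏ j ∈ Finset.range n, p.comp (X + C ((j : ℂ) * κ))

/-! ### Auxiliary material -/

noncomputable def Mtail (κ : ℂ) (n : ℕ) (p : ℂ[X]) : ℂ[X] :=
  ∏ j ∈ Finset.Ico 1 n, p.comp (X + C ((j : ℂ) * κ))

lemma comp_shift_comp (p : ℂ[X]) (s t : ℂ) :
    (p.comp (X + C s)).comp (X + C t) = p.comp (X + C (s + t)) := by
  rw [comp_assoc]
  congr 1
  rw [add_comp, X_comp, C_comp, add_assoc, ← C_add, add_comm t s]

lemma comp_shift_ne_zero {p : ℂ[X]} (hp : p ≠ 0) (t : ℂ) : p.comp (X + C t) ≠ 0 := by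
  intro h
  have h2 := congrArg (fun q : ℂ[X] => q.comp (X + C (-t))) h
  simp only [comp_shift_comp, add_neg_cancel, zero_comp] at h2
  apply hp
  simpa using h2

lemma natDegree_eq_zero_of_comp_shift_eq {p : ℂ[X]} {t : ℂ} (ht : t ≠ 0)
    (h : p.comp (X + C t) = p) : p.natDegree = 0 := by
  by_contra hd
  have heval : ∀ k : ℕ, p.eval ((k : ℂ) * t) = p.eval 0 := by
    intro k
    induction k with
    | zero => simp
    | succ k ih =>
      have h2 := congrArg (fun q : ℂ[X] => q.eval ((k : ℂ) * t)) h
      simp only [eval_comp, eval_add, eval_X, eval_C] at h2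
      push_cast
      rw [add_mul, one_mul, h2]
      exact ih
  have hq0 : p - C (p.eval 0) = 0 := by
    apply Polynomial.eq_zero_of_infinite_isRoot
    apply Set.infinite_of_injective_forall_mem (f := fun k : ℕ => (k : ℂ) * t)
    · intro i j hij
      have h3 := mul_right_cancel₀ ht hij
      exact_mod_cast h3
    · intro k
      simp [IsRoot, heval k]
  apply hd
  have : p = C (p.eval 0) := by rwa [sub_eq_zero] at hq0
  rw [this]; simp

lemma kFac_ne_zero {p : ℂ[X]} (hp : p ≠ 0) (κ : ℂ) (n : ℕ) : kFac κ n p ≠ 0 :=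
  Finset.prod_ne_zero_iff.mpr fun _ _ => comp_shift_ne_zero hp _

lemma Mtail_ne_zero {p : ℂ[X]} (hp : p ≠ 0) (κ : ℂ) (n : ℕ) : Mtail κ n p ≠ 0 :=
  Finset.prod_ne_zero_iff.mpr fun _ _ => comp_shift_ne_zero hp _

lemma natDegree_kFac (κ : ℂ) (n : ℕ) {p : ℂ[X]} (hp : p ≠ 0) :
    (kFac κ n p).natDegree = n * p.natDegree := by
  rw [kFac, Polynomial.natDegree_prod _ _ fun _ _ => comp_shift_ne_zero hp _]
  simp only [natDegree_comp, natDegree_X_add_C, mul_one, Finset.sum_const,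
    Finset.card_range, smul_eq_mul]

lemma natDegree_Mtail (κ : ℂ) (n : ℕ) {p : ℂ[X]} (hp : p ≠ 0) :
    (Mtail κ n p).natDegree = (n - 1) * p.natDegree := by
  rw [Mtail, Polynomial.natDegree_prod _ _ fun _ _ => comp_shift_ne_zero hp _]
  simp only [natDegree_comp, natDegree_X_add_C, mul_one, Finset.sum_const,
    Nat.card_Ico, smul_eq_mul]

lemma kFac_eq_mul_Mtail (κ : ℂ) {n : ℕ} (hn : 0 < n) (p : ℂ[X]) :
    kFac κ n p = p * Mtail κ n p := by
  rw [kFac, Mtail, Finset.range_eq_Ico, Finset.prod_eq_prod_Ico_succ_bot hn]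
  simp

lemma Mtail_dvd_kFac (κ : ℂ) {n : ℕ} (hn : 0 < n) (p : ℂ[X]) :
    Mtail κ n p ∣ kFac κ n p :=
  ⟨p, by rw [kFac_eq_mul_Mtail κ hn]; ring⟩

lemma kFac_comp_shift (κ : ℂ) {n : ℕ} (hn : 0 < n) (p : ℂ[X]) :
    (kFac κ n p).comp (X + C κ) = Mtail κ n p * p.comp (X + C ((n : ℂ) * κ)) := by
  rw [kFac, Polynomial.prod_comp]
  have h1 : ∀ j ∈ Finset.range n, (p.comp (X + C ((j : ℂ) * κ))).comp (X + C κ)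
      = p.comp (X + C (((j + 1 : ℕ) : ℂ) * κ)) := by
    intro j _
    rw [comp_shift_comp]
    have : ((j : ℂ) * κ + κ) = (((j + 1 : ℕ) : ℂ) * κ) := by push_cast; ring
    rw [this]
  rw [Finset.prod_congr rfl h1, Mtail,
    ← Finset.prod_Ico_succ_top hn,
    Finset.prod_Ico_eq_prod_range]
  simp only [Nat.add_sub_cancel]
  apply Finset.prod_congr rfl
  intro j _
  have : ((1 + j : ℕ) : ℂ) * κ = ((j + 1 : ℕ) : ℂ) * κ := by push_cast; ring
  rw [this]

lemma delta_kFac (κ : ℂ) {n : ℕ} (hn : 0 < n) (p : ℂ[X]) :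
    (kFac κ n p).comp (X + C κ) - kFac κ n p
      = Mtail κ n p * (p.comp (X + C ((n : ℂ) * κ)) - p) := by
  rw [kFac_comp_shift κ hn, kFac_eq_mul_Mtail κ hn]
  ring

lemma degree_comp_shift (F : ℂ[X]) (t : ℂ) : (F.comp (X + C t)).degree = F.degree := by
  by_cases hF : F = 0
  · simp [hF]
  · rw [degree_eq_natDegree (comp_shift_ne_zero hF t), degree_eq_natDegree hF, natDegree_comp]
    simp

lemma leadingCoeff_comp_shift (F : ℂ[X]) (t : ℂ) :
    (F.comp (X + C t)).leadingCoeff = F.leadingCoeff := by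
  rw [Polynomial.leadingCoeff_comp (by simp), (monic_X_add_C t).leadingCoeff, one_pow, mul_one]

lemma natDegree_delta_lt {F : ℂ[X]} (hF : F ≠ 0) (t : ℂ)
    (hD : F.comp (X + C t) - F ≠ 0) :
    (F.comp (X + C t) - F).natDegree < F.natDegree := by
  have h := degree_sub_lt (degree_comp_shift F t) (comp_shift_ne_zero hF t)
    (leadingCoeff_comp_shift F t)
  rw [degree_comp_shift] at h
  exact natDegree_lt_natDegree hD h

lemma key_lemma (κ : ℂ) (hκ : κ ≠ 0) {n : ℕ} (hn : 2 ≤ n) (p q : ℂ[X])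
    (hp : p.natDegree ≠ 0) (hq : q.natDegree ≠ 0)
    (hco : ∀ d : ℂ[X], d ∣ kFac κ n p → d ∣ kFac κ n q → IsUnit d)
    (hΔ : (kFac κ n p).comp (X + C κ) - kFac κ n p
            = (kFac κ n q).comp (X + C κ) - kFac κ n q
        ∨ (kFac κ n p).comp (X + C κ) - kFac κ n p
            = -((kFac κ n q).comp (X + C κ) - kFac κ n q)) :
    False := by
  classical
  have hn0 : 0 < n := by omega
  have hp0 : p ≠ 0 := fun h => hp (by simp [h])
  have hq0 : q ≠ 0 := fun h => hq (by simp [h])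
  have hDp : (kFac κ n p).comp (X + C κ) - kFac κ n p
      = Mtail κ n p * (p.comp (X + C ((n : ℂ) * κ)) - p) := delta_kFac κ hn0 p
  have hDq : (kFac κ n q).comp (X + C κ) - kFac κ n q
      = Mtail κ n q * (q.comp (X + C ((n : ℂ) * κ)) - q) := delta_kFac κ hn0 q
  have hnκ : (n : ℂ) * κ ≠ 0 :=
    mul_ne_zero (Nat.cast_ne_zero.mpr (by omega)) hκ
  have hfp : p.comp (X + C ((n : ℂ) * κ)) - p ≠ 0 := by
    intro h
    exact hp (natDegree_eq_zero_of_comp_shift_eq hnκ (by rwa [sub_eq_zero] at h))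
  have hD0 : (kFac κ n p).comp (X + C κ) - kFac κ n p ≠ 0 := by
    rw [hDp]
    exact mul_ne_zero (Mtail_ne_zero hp0 κ n) hfp
  have hdvdp : Mtail κ n p ∣ (kFac κ n p).comp (X + C κ) - kFac κ n p := ⟨_, hDp⟩
  have hdvdq : Mtail κ n q ∣ (kFac κ n p).comp (X + C κ) - kFac κ n p := by
    rcases hΔ with h | h
    · exact h ▸ ⟨_, hDq⟩
    · rw [h, hDq]
      exact (dvd_neg).mpr (Dvd.intro _ rfl)
  have hcop : IsCoprime (Mtail κ n p) (Mtail κ n q) := by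
    rw [← EuclideanDomain.gcd_isUnit_iff]
    apply hco
    · exact dvd_trans (EuclideanDomain.gcd_dvd_left _ _) (Mtail_dvd_kFac κ hn0 p)
    · exact dvd_trans (EuclideanDomain.gcd_dvd_right _ _) (Mtail_dvd_kFac κ hn0 q)
  have hmul : Mtail κ n p * Mtail κ n q ∣ (kFac κ n p).comp (X + C κ) - kFac κ n p :=
    hcop.mul_dvd hdvdp hdvdq
  have hlow : (n - 1) * p.natDegree + (n - 1) * q.natDegree
      ≤ ((kFac κ n p).comp (X + C κ) - kFac κ n p).natDegree := by
    have h := Polynomial.natDegree_le_of_dvd hmul hD0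
    rwa [Polynomial.natDegree_mul (Mtail_ne_zero hp0 κ n) (Mtail_ne_zero hq0 κ n),
      natDegree_Mtail κ n hp0, natDegree_Mtail κ n hq0] at h
  have hupp : ((kFac κ n p).comp (X + C κ) - kFac κ n p).natDegree < n * p.natDegree := by
    have h := natDegree_delta_lt (kFac_ne_zero hp0 κ n) κ hD0
    rwa [natDegree_kFac κ n hp0] at h
  have hupq : ((kFac κ n p).comp (X + C κ) - kFac κ n p).natDegree < n * q.natDegree := by
    have hq' : (kFac κ n q).comp (X + C κ) - kFac κ n q ≠ 0 := by
      rcases hΔ with h | h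
      · intro h0; exact hD0 (by rw [h, h0])
      · intro h0; exact hD0 (by rw [h, h0, neg_zero])
    have h := natDegree_delta_lt (kFac_ne_zero hq0 κ n) κ hq'
    rw [natDegree_kFac κ n hq0] at h
    rcases hΔ with h1 | h1
    · rw [h1]; exact h
    · rw [h1, natDegree_neg]; exact h
  obtain ⟨k, rfl⟩ := Nat.exists_eq_add_of_le hn
  have hmp : 1 ≤ p.natDegree := Nat.one_le_iff_ne_zero.mpr hp
  have hmq : 1 ≤ q.natDegree := Nat.one_le_iff_ne_zero.mpr hq
  have hsub : (2 + k - 1) = k + 1 := by omega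
  rw [hsub] at hlow
  nlinarith [hlow, hupp, hupq, hmp, hmq]

theorem stmt_9 (κ : ℂ) (hκ : κ ≠ 0) (n : ℕ) (a b c : ℂ[X])
    (hone : a.natDegree = 0 ∨ b.natDegree = 0 ∨ c.natDegree = 0)
    (hnc : ¬ (a.natDegree = 0 ∧ b.natDegree = 0 ∧ c.natDegree = 0))
    (hrp : ∀ d : ℂ[X], d ∣ kFac κ n a → d ∣ kFac κ n b → d ∣ kFac κ n c → IsUnit d)
    (hsum : kFac κ n a + kFac κ n b = kFac κ n c) :
    n = 1 := by
  rcases Nat.lt_or_ge n 2 with h2 | h2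
  · interval_cases n
    · exfalso
      simp only [kFac, Finset.range_zero, Finset.prod_empty] at hsum
      have h1 : (1 : ℂ[X]) = 0 := by linear_combination hsum
      exact one_ne_zero h1
    · rfl
  · exfalso
    have hconstk : ∀ α : ℂ, kFac κ n (C α) = C (α ^ n) := by
      intro α
      rw [kFac, Finset.prod_congr rfl (fun j _ => C_comp), Finset.prod_const,
        Finset.card_range, ← C_pow]
    have hdegz : ∀ r : ℂ[X], (kFac κ n r).natDegree = 0 → r.natDegree = 0 := by
      intro r h
      by_cases hr : r = 0
      · simp [hr]
      · rw [natDegree_kFac κ n hr] at h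
        rcases Nat.mul_eq_zero.mp h with h | h
        · omega
        · exact h
    rcases hone with ha | hb | hc
    · -- a constant
      obtain ⟨α, rfl⟩ := natDegree_eq_zero.mp ha
      by_cases hb : b.natDegree = 0
      · obtain ⟨β, rfl⟩ := natDegree_eq_zero.mp hb
        have hkc : kFac κ n c = C (α ^ n + β ^ n) := by
          rw [← hsum, hconstk, hconstk, C_add]
        exact hnc ⟨ha, hb, hdegz c (by rw [hkc, natDegree_C])⟩
      · by_cases hc : c.natDegree = 0
        · obtain ⟨γ, rfl⟩ := natDegree_eq_zero.mp hc
          have hkb : kFac κ n b = C (γ ^ n - α ^ n) := by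
            rw [C_sub, ← hconstk γ, ← hconstk α]
            linear_combination hsum
          exact hb (hdegz b (by rw [hkb, natDegree_C]))
        · refine key_lemma κ hκ h2 b c hb hc ?_ ?_
          · intro d h1 h2'
            refine hrp d ?_ h1 h2'
            have : kFac κ n (C α) = kFac κ n c - kFac κ n b := by
              rw [← hsum]; ring
            rw [this]
            exact dvd_sub h2' h1
          · left
            have hcb : kFac κ n c = kFac κ n b + C (α ^ n) := by
              rw [← hsum, hconstk]; ring
            rw [hcb, add_comp, C_comp]
            ring
    · -- b constant
      obtain ⟨β, rfl⟩ := natDegree_eq_zero.mp hb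
      by_cases ha : a.natDegree = 0
      · obtain ⟨α, rfl⟩ := natDegree_eq_zero.mp ha
        have hkc : kFac κ n c = C (α ^ n + β ^ n) := by
          rw [← hsum, hconstk, hconstk, C_add]
        exact hnc ⟨ha, hb, hdegz c (by rw [hkc, natDegree_C])⟩
      · by_cases hc : c.natDegree = 0
        · obtain ⟨γ, rfl⟩ := natDegree_eq_zero.mp hc
          have hka : kFac κ n a = C (γ ^ n - β ^ n) := by
            rw [C_sub, ← hconstk γ, ← hconstk β]
            linear_combination hsum
          exact ha (hdegz a (by rw [hka, natDegree_C]))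
        · refine key_lemma κ hκ h2 a c ha hc ?_ ?_
          · intro d h1 h2'
            refine hrp d h1 ?_ h2'
            have : kFac κ n (C β) = kFac κ n c - kFac κ n a := by
              rw [← hsum]; ring
            rw [this]
            exact dvd_sub h2' h1
          · left
            have hca : kFac κ n c = kFac κ n a + C (β ^ n) := by
              rw [← hsum, hconstk]
            rw [hca, add_comp, C_comp]
            ring
    · -- c constant
      obtain ⟨γ, rfl⟩ := natDegree_eq_zero.mp hc
      by_cases ha : a.natDegree = 0
      · obtain ⟨α, rfl⟩ := natDegree_eq_zero.mp ha
        have hkb : kFac κ n b = C (γ ^ n - α ^ n) := by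
          rw [C_sub, ← hconstk γ, ← hconstk α]
          linear_combination hsum
        exact hnc ⟨ha, hdegz b (by rw [hkb, natDegree_C]), hc⟩
      · by_cases hb : b.natDegree = 0
        · obtain ⟨β, rfl⟩ := natDegree_eq_zero.mp hb
          have hka : kFac κ n a = C (γ ^ n - β ^ n) := by
            rw [C_sub, ← hconstk γ, ← hconstk β]
            linear_combination hsum
          exact ha (hdegz a (by rw [hka, natDegree_C]))
        · refine key_lemma κ hκ h2 a b ha hb ?_ ?_
          · intro d h1 h2'
            exact hrp d h1 h2' (by rw [← hsum]; exact dvd_add h1 h2')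
          · right
            have hab : kFac κ n a = C (γ ^ n) - kFac κ n b := by
              rw [← hconstk γ, ← hsum]; ring
            rw [hab, sub_comp, C_comp]
            ring
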